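/- For each k ≥ 1, the function ω^(k): ℤ → ℤ determined by the base window [1−k, 2−k, …, n−1−k, n+k(n−1)] (extended by ω(i+n) = ω(i)+n) is an element of S̃_n, and ω^(k) avoids the pattern 321. -/

import Mathlib

/-!
Write `ω i = i - k`, plus `k * n` when `n ∣ i`. Then `i - k ≤ ω i` everywhere, with equality
off `nℤ`, so the larger entry `ω a` of any inversion `a < b`, `ω b < ω a` sits at a multiple
of `n`. The first two positions of a `321` pattern would thus both be multiples of `n`, but on
`nℤ` the map `ω` is a translation, hence increasing.
-/

open Finset Function

lemma Int.sum_Icc_one_id (n : ℕ) : ∑ i ∈ Icc (1 : ℤ) n, i = ((n + 1).choose 2 : ℕ) := by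
  induction n with
  | zero => simp
  | succ m ih =>
    rw [Nat.cast_succ, ← insert_Icc_right_eq_Icc_add_one (by omega), sum_insert (by simp), ih,
      Nat.choose_succ_succ' (m + 1), Nat.choose_one_right]
    push_cast
    ring

/-- The paper's `ω^(k)` on all of `ℤ`: its window `ω 1, …, ω n` is
`1 - k, …, n - 1 - k, n + k(n - 1)`. -/
def spiral (n k i : ℤ) : ℤ := i - k + if n ∣ i then k * n else 0

section

variable {n k i : ℤ}

lemma spiral_of_dvd (h : n ∣ i) : spiral n k i = i - k + k * n := by
  simp [spiral, h]

lemma spiral_of_not_dvd (h : ¬ n ∣ i) : spiral n k i = i - k := by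
  simp [spiral, h]

lemma spiral_add_period (n k i : ℤ) : spiral n k (i + n) = spiral n k i + n := by
  simp only [spiral, dvd_add_self_right]
  ring

lemma spiral_bijective (n k : ℤ) : Bijective (spiral n k) := by
  refine bijective_iff_has_inverse.mpr
    ⟨fun j => j + k - if n ∣ j + k then k * n else 0, fun i => ?_, fun j => ?_⟩
  · by_cases hi : n ∣ i
    · have : i - k + k * n + k = i + k * n := by ring
      simp [spiral_of_dvd hi, this, hi.add (dvd_mul_left n k)]
    · simp [spiral_of_not_dvd hi, hi]
  · by_cases hj : n ∣ j + k
    · simp only [if_pos hj]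
      rw [spiral_of_dvd (hj.sub (dvd_mul_left n k))]
      ring
    · simp only [if_neg hj, sub_zero]
      rw [spiral_of_not_dvd (by simpa using hj)]
      ring

lemma sub_le_spiral (hkn : 0 ≤ k * n) (i : ℤ) : i - k ≤ spiral n k i := by
  unfold spiral
  split <;> omega

lemma dvd_of_spiral_lt (hkn : 0 ≤ k * n) {a b : ℤ} (hab : a < b)
    (h : spiral n k b < spiral n k a) : n ∣ a := by
  by_contra ha
  have := sub_le_spiral hkn b
  rw [spiral_of_not_dvd ha] at h
  omega

lemma spiral_avoids_321 (hkn : 0 ≤ k * n) :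
    ¬ ∃ a b c : ℤ, a < b ∧ b < c ∧ spiral n k c < spiral n k b ∧ spiral n k b < spiral n k a := by
  rintro ⟨a, b, c, hab, hbc, hcb, hba⟩
  have hb := dvd_of_spiral_lt hkn hbc hcb
  rw [spiral_of_dvd (dvd_of_spiral_lt hkn hab hba), spiral_of_dvd hb] at hba
  omega

end

lemma sum_Icc_one_spiral (n : ℕ) (k : ℤ) :
    ∑ i ∈ Icc (1 : ℤ) n, spiral n k i = ((n + 1).choose 2 : ℕ) := by
  have hdvd : ∀ i ∈ Icc (1 : ℤ) n, ((n : ℤ) ∣ i ↔ i = n) := fun i hi => by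
    rw [mem_Icc] at hi
    exact ⟨fun h => le_antisymm hi.2 (Int.le_of_dvd (by omega) h), fun h => h ▸ dvd_rfl⟩
  simp only [spiral, sum_add_distrib, sum_sub_distrib, Int.sum_Icc_one_id]
  rw [sum_congr rfl fun i hi => if_congr (hdvd i hi) rfl rfl, sum_ite_eq']
  rcases eq_or_ne n 0 with rfl | hn
  · simp
  · have : (n : ℤ) ∈ Icc (1 : ℤ) n := by simp; omega
    simp [this]
    ring

theorem spiral_element_avoids_321_general (n k : ℕ) :
    ∃ ω : ℤ → ℤ,
      (∀ i : ℤ, ω (i + n) = ω i + n) ∧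
      (∀ i : ℤ, 1 ≤ i → i ≤ (n : ℤ) - 1 → ω i = i - k) ∧
      ω n = (n : ℤ) + k * ((n : ℤ) - 1) ∧
      Function.Bijective ω ∧
      (∑ i ∈ Finset.Icc (1 : ℤ) (n : ℤ), ω i = ((n + 1).choose 2 : ℤ)) ∧
      ¬ ∃ i₁ i₂ i₃ : ℤ, i₁ < i₂ ∧ i₂ < i₃ ∧ ω i₃ < ω i₂ ∧ ω i₂ < ω i₁ := by
  have hkn : (0 : ℤ) ≤ k * n := by positivity
  refine ⟨spiral n k, spiral_add_period n k, fun i h1 h2 => spiral_of_not_dvd ?_, ?_,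
    spiral_bijective n k, sum_Icc_one_spiral n k, spiral_avoids_321 hkn⟩
  · exact fun h => by have := Int.le_of_dvd (by omega) h; omega
  · rw [spiral_of_dvd dvd_rfl]
    ring

theorem spiral_element_avoids_321 (n k : ℕ) (hn : 2 ≤ n) (hk : 1 ≤ k) :
    ∃ ω : ℤ → ℤ,
      (∀ i : ℤ, ω (i + n) = ω i + n) ∧
      (∀ i : ℤ, 1 ≤ i → i ≤ (n : ℤ) - 1 → ω i = i - k) ∧
      ω n = (n : ℤ) + k * ((n : ℤ) - 1) ∧
      Function.Bijective ω ∧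
      (∑ i ∈ Finset.Icc (1 : ℤ) (n : ℤ), ω i = ((n + 1).choose 2 : ℤ)) ∧
      ¬ ∃ i₁ i₂ i₃ : ℤ, i₁ < i₂ ∧ i₂ < i₃ ∧ ω i₃ < ω i₂ ∧ ω i₂ < ω i₁ :=
  spiral_element_avoids_321_general n k
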